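/- Consider a database D, a set Σ of FDs, and an SJFCQ Q = Q₁ ⊎ Q₂, i.e., Q is the union of two nonempty CQs Q₁ and Q₂ sharing no atoms and no variables. Then rfreq(Q, D, Σ) = rfreq(Q₁, D, Σ) × rfreq(Q₂, D, Σ). -/

import Mathlib

open scoped Classical

/-- A fact over relation name `rel`, assigning a constant to each attribute. -/
structure DBFact (Rel Attr Const : Type*) where
  rel : Rel
  val : Attr → Const

/-- A functional dependency `rel : lhs → rhs`. -/
structure DBFD (Rel Attr : Type*) where
  rel : Rel
  lhs : Set Attr
  rhs : Set Attr

/-- A term of a conjunctive query: a variable or a constant. -/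
inductive DBTerm (Var Const : Type*) where
  | var : Var → DBTerm Var Const
  | const : Const → DBTerm Var Const

/-- An atom of a conjunctive query. -/
structure DBAtom (Rel Attr Var Const : Type*) where
  rel : Rel
  val : Attr → DBTerm Var Const

variable {Rel Attr Var Const : Type*}

/-- A database satisfies a single FD. -/
def satFD (D : Finset (DBFact Rel Attr Const)) (φ : DBFD Rel Attr) : Prop :=
  ∀ f ∈ D, ∀ g ∈ D, f.rel = φ.rel → g.rel = φ.rel →
    (∀ A ∈ φ.lhs, f.val A = g.val A) → ∀ A ∈ φ.rhs, f.val A = g.val A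

/-- A database satisfies a set of FDs. -/
def satFDs (D : Finset (DBFact Rel Attr Const)) (S : Set (DBFD Rel Attr)) : Prop :=
  ∀ φ ∈ S, satFD D φ

/-- `E` is a repair of `D` w.r.t. `S`: an inclusion-maximal consistent subset of `D`. -/
def isRepair (S : Set (DBFD Rel Attr)) (D E : Finset (DBFact Rel Attr Const)) : Prop :=
  E ⊆ D ∧ satFDs E S ∧ ∀ F, E ⊆ F → F ⊆ D → satFDs F S → F = E

/-- The set of repairs of `D` w.r.t. `S`. -/
noncomputable def rep (D : Finset (DBFact Rel Attr Const)) (S : Set (DBFD Rel Attr)) :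
    Finset (Finset (DBFact Rel Attr Const)) :=
  D.powerset.filter (fun E => isRepair S D E)

/-- Applying a homomorphism (a map from variables to constants) to an atom yields a fact. -/
def applyHom (h : Var → Const) (α : DBAtom Rel Attr Var Const) : DBFact Rel Attr Const :=
  ⟨α.rel, fun A => match α.val A with
    | DBTerm.var v => h v
    | DBTerm.const c => c⟩

/-- `D ⊨ Q`: there is a homomorphism from the CQ `Q` into `D`. -/
def entails (D : Finset (DBFact Rel Attr Const)) (Q : Finset (DBAtom Rel Attr Var Const)) :
    Prop :=
  ∃ h : Var → Const, ∀ α ∈ Q, applyHom h α ∈ D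

/-- The repairs of `D` w.r.t. `S` that entail `Q`. -/
noncomputable def repQ (D : Finset (DBFact Rel Attr Const)) (S : Set (DBFD Rel Attr))
    (Q : Finset (DBAtom Rel Attr Var Const)) : Finset (Finset (DBFact Rel Attr Const)) :=
  (rep D S).filter (fun E => entails E Q)

/-- The relative frequency of `Q` w.r.t. `D` and `S`. -/
noncomputable def rfreq (Q : Finset (DBAtom Rel Attr Var Const))
    (D : Finset (DBFact Rel Attr Const)) (S : Set (DBFD Rel Attr)) : ℚ :=
  ((repQ D S Q).card : ℚ) / ((rep D S).card : ℚ)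

/-- `Q` is self-join-free: no relation name occurs in two distinct atoms. -/
def sjf (Q : Finset (DBAtom Rel Attr Var Const)) : Prop :=
  ∀ α ∈ Q, ∀ β ∈ Q, α.rel = β.rel → α = β

/-- A canonical set of FDs with an LHS chain, given by the chain
`R : X₁ → Y₁, …, R : Xₙ → Yₙ` for each relation name `R`, with
`X₁ ⊊ X₂ ⊊ ⋯ ⊊ Xₙ`, each `Y_i` nonempty, `X_i ∩ Y_j = ∅` for all `i,j`,
and `Y_i ∩ Y_j = ∅` for `i ≠ j`. -/
def canonicalChain (chain : Rel → List (Set Attr × Set Attr)) : Prop :=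
  ∀ R : Rel,
    ((chain R).Pairwise fun a b => a.1 ⊂ b.1) ∧
    (∀ xy ∈ chain R, (xy.2 : Set Attr).Nonempty) ∧
    (∀ xy ∈ chain R, ∀ xy' ∈ chain R, xy.1 ∩ xy'.2 = ∅) ∧
    ((chain R).Pairwise fun a b => a.2 ∩ b.2 = ∅)

/-- The set of FDs induced by a chain. -/
def chainFDs (chain : Rel → List (Set Attr × Set Attr)) : Set (DBFD Rel Attr) :=
  {φ | ∃ xy ∈ chain φ.rel, φ.lhs = xy.1 ∧ φ.rhs = xy.2}

/-- The `i`-th FD of the chain `L` has some attribute carrying a variable in atom `α`. -/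
def chainVarAt (L : List (Set Attr × Set Attr)) (α : DBAtom Rel Attr Var Const) (i : ℕ) :
    Prop :=
  ∃ xy, L[i]? = some xy ∧ ∃ A ∈ xy.1 ∪ xy.2, ∃ v, α.val A = DBTerm.var v

/-- The index of the primary FD of the chain `L` w.r.t. the atom `α` (if it exists):
the first FD some of whose attributes carries a variable in `α`. -/
noncomputable def primaryIdx (L : List (Set Attr × Set Attr))
    (α : DBAtom Rel Attr Var Const) : Option ℕ :=
  if h : ∃ i, chainVarAt L α i then some (Nat.find h) else none

/-- The primary FD of the chain `L` w.r.t. the atom `α` (if it exists). -/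
noncomputable def primaryFD (L : List (Set Attr × Set Attr))
    (α : DBAtom Rel Attr Var Const) : Option (Set Attr × Set Attr) :=
  (primaryIdx L α).bind fun i => L[i]?

/-- The primary prefix of the chain `L` w.r.t. the atom `α`: the FDs strictly before the
primary FD, or the whole chain if there is no primary FD. -/
noncomputable def primaryPrefix (L : List (Set Attr × Set Attr))
    (α : DBAtom Rel Attr Var Const) : List (Set Attr × Set Attr) :=
  L.take ((primaryIdx L α).getD L.length)

/-- The primary-lhs positions (attributes) of the atom `α` w.r.t. the chain `L`. -/
noncomputable def primaryLhs (L : List (Set Attr × Set Attr))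
    (α : DBAtom Rel Attr Var Const) : Set Attr :=
  match primaryFD L α with
  | some xy => xy.1
  | none => Set.univ

/-- The variables of `α` occurring at primary-lhs positions. -/
noncomputable def pvar (L : List (Set Attr × Set Attr))
    (α : DBAtom Rel Attr Var Const) : Set Var :=
  {v | ∃ A ∈ primaryLhs L α, α.val A = DBTerm.var v}

/-- A liaison variable of `Q`: a variable with more than one occurrence in `Q`. -/
def liaison (Q : Finset (DBAtom Rel Attr Var Const)) (v : Var) : Prop :=
  ∃ α ∈ Q, ∃ β ∈ Q, ∃ A B, α.val A = DBTerm.var v ∧ β.val B = DBTerm.var v ∧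
    (α ≠ β ∨ A ≠ B)

/-- The complex part `comp(Q,Σ)` of `Q` w.r.t. the chain. -/
noncomputable def compPart (chain : Rel → List (Set Attr × Set Attr))
    (Q : Finset (DBAtom Rel Attr Var Const)) : Finset (DBAtom Rel Attr Var Const) :=
  Q.filter fun α => ∃ A, A ∉ primaryLhs (chain α.rel) α ∧
    ((∃ c, α.val A = DBTerm.const c) ∨ ∃ v, α.val A = DBTerm.var v ∧ liaison Q v) ∧
    ∀ xy ∈ primaryPrefix (chain α.rel) α, A ∉ xy.1 ∪ xy.2

/-- The fact `f` agrees with the atom `α` at attribute `A`, i.e. `α[A]` is the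
constant `f[A]`. -/
def agreesAt (f : DBFact Rel Attr Const) (α : DBAtom Rel Attr Var Const) (A : Attr) : Prop :=
  α.val A = DBTerm.const (f.val A)

/-- `D_conf^{Σ,Q}`: the facts of `D` conflicting with `Q` via an FD of the primary prefix. -/
noncomputable def dconf (chain : Rel → List (Set Attr × Set Attr))
    (Q : Finset (DBAtom Rel Attr Var Const)) (D : Finset (DBFact Rel Attr Const)) :
    Finset (DBFact Rel Attr Const) :=
  D.filter fun f => ∃ α ∈ Q, α.rel = f.rel ∧
    ∃ xy ∈ primaryPrefix (chain α.rel) α,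
      (∀ A ∈ xy.1, agreesAt f α A) ∧ ∃ B ∈ xy.2, ¬ agreesAt f α B

/-- `D_ind^{Σ,Q}`: the facts of `D \ D_conf^{Σ,Q}` disagreeing with `Q` on the lhs of an
FD of the primary prefix. -/
noncomputable def dind (chain : Rel → List (Set Attr × Set Attr))
    (Q : Finset (DBAtom Rel Attr Var Const)) (D : Finset (DBFact Rel Attr Const)) :
    Finset (DBFact Rel Attr Const) :=
  (D \ dconf chain Q D).filter fun f => ∃ α ∈ Q, α.rel = f.rel ∧
    ∃ xy ∈ primaryPrefix (chain α.rel) α, ∃ A ∈ xy.1, ¬ agreesAt f α A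

/-- The active domain of `D`: the constants occurring in `D`. -/
noncomputable def adom [Fintype Attr] (D : Finset (DBFact Rel Attr Const)) : Finset Const :=
  D.biUnion fun f => Finset.univ.image f.val

/-- Substituting a constant for a variable in a term. -/
noncomputable def substTerm (x : Var) (c : Const) : DBTerm Var Const → DBTerm Var Const
  | DBTerm.var v => if v = x then DBTerm.const c else DBTerm.var v
  | DBTerm.const d => DBTerm.const d

/-- Substituting a constant for a variable in an atom. -/
noncomputable def substAtom (x : Var) (c : Const) (α : DBAtom Rel Attr Var Const) :
    DBAtom Rel Attr Var Const :=
  ⟨α.rel, fun A => substTerm x c (α.val A)⟩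

/-- `Q_{x↦c}`: the query obtained from `Q` by replacing the variable `x` with `c`. -/
noncomputable def substQ (x : Var) (c : Const) (Q : Finset (DBAtom Rel Attr Var Const)) :
    Finset (DBAtom Rel Attr Var Const) :=
  Q.image (substAtom x c)

/-- The variables occurring in `Q`. -/
def qvars (Q : Finset (DBAtom Rel Attr Var Const)) : Set Var :=
  {v | ∃ α ∈ Q, ∃ A, α.val A = DBTerm.var v}

/-- `S` has an LHS chain: the left-hand sides of FDs over the same relation are
⊆-comparable. -/
def hasLHSChain (S : Set (DBFD Rel Attr)) : Prop :=
  ∀ φ ∈ S, ∀ ψ ∈ S, φ.rel = ψ.rel → φ.lhs ⊆ ψ.lhs ∨ ψ.lhs ⊆ φ.lhs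

/-! Facts over different relation names never violate an FD together, so a repair of `D`
is exactly a union of a repair of the facts over the relations of `Q₁` and a repair of the
remaining facts. Self-join-freeness puts all atoms of `Q₂` on the second side, and since the
variables of `Q₁` and `Q₂` are disjoint, a repair entails `Q₁ ∪ Q₂` iff its first part
entails `Q₁` and its second part entails `Q₂`. Counting through this product decomposition
gives the factorisation of relative frequencies. -/

open Finset

noncomputable def restrictRels (q : Rel → Prop) (E : Finset (DBFact Rel Attr Const)) :
    Finset (DBFact Rel Attr Const) :=
  E.filter fun f => q f.rel

lemma restrictRels_subset (q : Rel → Prop) (E : Finset (DBFact Rel Attr Const)) :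
    restrictRels q E ⊆ E :=
  filter_subset _ _

lemma restrictRels_mono (q : Rel → Prop) {E F : Finset (DBFact Rel Attr Const)} (h : E ⊆ F) :
    restrictRels q E ⊆ restrictRels q F :=
  filter_subset_filter _ h

lemma restrictRels_union_restrictRels_not (q : Rel → Prop)
    (E : Finset (DBFact Rel Attr Const)) :
    restrictRels q E ∪ restrictRels (fun r => ¬ q r) E = E := by
  ext f
  simp only [restrictRels, mem_union, mem_filter]
  tauto

lemma restrictRels_eq_self {q : Rel → Prop} {E : Finset (DBFact Rel Attr Const)}
    (h : ∀ f ∈ E, q f.rel) : restrictRels q E = E :=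
  filter_true_of_mem h

lemma restrictRels_eq_empty {q : Rel → Prop} {E : Finset (DBFact Rel Attr Const)}
    (h : ∀ f ∈ E, ¬ q f.rel) : restrictRels q E = ∅ :=
  filter_false_of_mem h

lemma restrictRels_union (q : Rel → Prop) (E F : Finset (DBFact Rel Attr Const)) :
    restrictRels q (E ∪ F) = restrictRels q E ∪ restrictRels q F :=
  filter_union _ _ _

lemma rel_of_mem_restrictRels {q : Rel → Prop} {E : Finset (DBFact Rel Attr Const)}
    {f : DBFact Rel Attr Const} (hf : f ∈ restrictRels q E) : q f.rel :=
  (mem_filter.1 hf).2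

lemma satFDs_of_subset {E F : Finset (DBFact Rel Attr Const)} {S : Set (DBFD Rel Attr)}
    (h : E ⊆ F) (hF : satFDs F S) : satFDs E S :=
  fun φ hφ f hf g hg => hF φ hφ f (h hf) g (h hg)

lemma satFDs_union {E F : Finset (DBFact Rel Attr Const)} {S : Set (DBFD Rel Attr)}
    (hsep : ∀ f ∈ E, ∀ g ∈ F, f.rel ≠ g.rel) (hE : satFDs E S) (hF : satFDs F S) :
    satFDs (E ∪ F) S := by
  intro φ hφ f hf g hg hfφ hgφ
  rcases mem_union.1 hf with hf | hf <;> rcases mem_union.1 hg with hg | hg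
  · exact hE φ hφ f hf g hg hfφ hgφ
  · exact absurd (hfφ.trans hgφ.symm) (hsep f hf g hg)
  · exact absurd (hgφ.trans hfφ.symm) (hsep g hg f hf)
  · exact hF φ hφ f hf g hg hfφ hgφ

lemma satFDs_restrictRels_union_restrictRels_not (q : Rel → Prop)
    {E F : Finset (DBFact Rel Attr Const)} {S : Set (DBFD Rel Attr)}
    (hE : satFDs (restrictRels q E) S) (hF : satFDs (restrictRels (fun r => ¬ q r) F) S) :
    satFDs (restrictRels q E ∪ restrictRels (fun r => ¬ q r) F) S :=
  satFDs_union (fun _ hf _ hg hfg =>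
    rel_of_mem_restrictRels hg (hfg ▸ rel_of_mem_restrictRels hf)) hE hF

lemma mem_rep_iff {D E : Finset (DBFact Rel Attr Const)} {S : Set (DBFD Rel Attr)} :
    E ∈ rep D S ↔ isRepair S D E := by
  simp only [rep, mem_filter, mem_powerset, and_iff_right_iff_imp]
  exact fun h => h.1

/-- A consistent subset of `D` of maximum cardinality is a repair (`∅` is consistent). -/
lemma rep_nonempty (S : Set (DBFD Rel Attr)) (D : Finset (DBFact Rel Attr Const)) :
    (rep D S).Nonempty := by
  have hcons : (D.powerset.filter fun E => satFDs E S).Nonempty :=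
    ⟨∅, mem_filter.2 ⟨empty_mem_powerset D, fun _ _ f hf => absurd hf (notMem_empty f)⟩⟩
  obtain ⟨E, hE, hmax⟩ := exists_max_image _ card hcons
  rw [mem_filter, mem_powerset] at hE
  refine ⟨E, mem_rep_iff.2 ⟨hE.1, hE.2, fun F hEF hFD hF => ?_⟩⟩
  exact (eq_of_subset_of_card_le hEF (hmax F (mem_filter.2 ⟨mem_powerset.2 hFD, hF⟩))).symm

lemma card_rep_pos (S : Set (DBFD Rel Attr)) (D : Finset (DBFact Rel Attr Const)) :
    0 < #(rep D S) :=
  card_pos.2 (rep_nonempty S D)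

/-- A repair restricts to a repair: any consistent enlargement `F` of the restriction,
completed by the facts of `E` over the other relation names, would enlarge `E`. -/
lemma isRepair_restrictRels (q : Rel → Prop) {S : Set (DBFD Rel Attr)} {D E : Finset (DBFact Rel Attr Const)}
    (hE : isRepair S D E) :
    isRepair S (restrictRels q D) (restrictRels q E) := by
  obtain ⟨hED, hsat, hmax⟩ := hE
  refine ⟨restrictRels_mono q hED, satFDs_of_subset (restrictRels_subset q E) hsat, ?_⟩
  intro F hEF hFD hF
  have hFq : restrictRels q F = F :=
    restrictRels_eq_self fun f hf => rel_of_mem_restrictRels (hFD hf)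
  set G := F ∪ restrictRels (fun r => ¬ q r) E
  have hEG : E ⊆ G := by
    rw [← restrictRels_union_restrictRels_not q E]
    exact union_subset_union hEF subset_rfl
  have hGD : G ⊆ D := union_subset (hFD.trans (restrictRels_subset q D))
    ((restrictRels_subset _ E).trans hED)
  have hG : satFDs G S := by
    have := satFDs_restrictRels_union_restrictRels_not q (hFq ▸ hF)
      (satFDs_of_subset (restrictRels_subset (fun r => ¬ q r) E) hsat)
    rwa [hFq] at this
  have hqG : restrictRels q G = F := by
    rw [restrictRels_union, hFq,
      restrictRels_eq_empty (E := restrictRels (fun r => ¬ q r) E) fun _ hf =>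
        rel_of_mem_restrictRels hf, union_empty]
  rw [← hqG, hmax G hEG hGD hG]

lemma isRepair_of_restrictRels {S : Set (DBFD Rel Attr)} {D E : Finset (DBFact Rel Attr Const)}
    (q : Rel → Prop) (hED : E ⊆ D) (hq : isRepair S (restrictRels q D) (restrictRels q E))
    (hnq : isRepair S (restrictRels (fun r => ¬ q r) D) (restrictRels (fun r => ¬ q r) E)) :
    isRepair S D E := by
  refine ⟨hED, ?_, fun F hEF hFD hF => ?_⟩
  · rw [← restrictRels_union_restrictRels_not q E]
    exact satFDs_restrictRels_union_restrictRels_not q hq.2.1 hnq.2.1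
  · have hFq := hq.2.2 _ (restrictRels_mono q hEF) (restrictRels_mono q hFD)
      (satFDs_of_subset (restrictRels_subset q F) hF)
    have hFnq := hnq.2.2 _ (restrictRels_mono _ hEF) (restrictRels_mono _ hFD)
      (satFDs_of_subset (restrictRels_subset _ F) hF)
    rw [← restrictRels_union_restrictRels_not q F, hFq, hFnq,
      restrictRels_union_restrictRels_not]

lemma restrictRels_union_of_subset (q : Rel → Prop) {D E₁ E₂ : Finset (DBFact Rel Attr Const)}
    (h₁ : E₁ ⊆ restrictRels q D) (h₂ : E₂ ⊆ restrictRels (fun r => ¬ q r) D) :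
    restrictRels q (E₁ ∪ E₂) = E₁ ∧ restrictRels (fun r => ¬ q r) (E₁ ∪ E₂) = E₂ := by
  have hq₁ : ∀ f ∈ E₁, q f.rel := fun f hf => rel_of_mem_restrictRels (h₁ hf)
  have hnq₂ : ∀ f ∈ E₂, ¬ q f.rel := fun f hf => rel_of_mem_restrictRels (h₂ hf)
  rw [restrictRels_union, restrictRels_union, restrictRels_eq_self hq₁,
    restrictRels_eq_self (q := fun r => ¬ q r) hnq₂, restrictRels_eq_empty hnq₂,
    restrictRels_eq_empty (q := fun r => ¬ q r) fun f hf => not_not.2 (hq₁ f hf)]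
  exact ⟨union_empty E₁, empty_union E₂⟩

/-- Repairs of `D` correspond bijectively to pairs of repairs of its two restrictions. -/
lemma card_filter_rep_eq_mul (q : Rel → Prop) (S : Set (DBFD Rel Attr))
    (D : Finset (DBFact Rel Attr Const)) (P₁ P₂ : Finset (DBFact Rel Attr Const) → Prop) :
    #((rep D S).filter fun E => P₁ (restrictRels q E) ∧ P₂ (restrictRels (fun r => ¬ q r) E))
      = #((rep (restrictRels q D) S).filter P₁) *
        #((rep (restrictRels (fun r => ¬ q r) D) S).filter P₂) := by
  rw [← card_product]
  refine card_nbij' (fun E => (restrictRels q E, restrictRels (fun r => ¬ q r) E))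
    (fun p => p.1 ∪ p.2) ?_ ?_ ?_ ?_
  · intro E hE
    simp only [mem_coe, mem_filter, mem_rep_iff, mem_product] at hE ⊢
    exact ⟨⟨isRepair_restrictRels q hE.1, hE.2.1⟩, ⟨isRepair_restrictRels _ hE.1, hE.2.2⟩⟩
  · rintro ⟨E₁, E₂⟩ hE
    simp only [mem_coe, mem_filter, mem_rep_iff, mem_product] at hE ⊢
    obtain ⟨⟨hE₁, hP₁⟩, ⟨hE₂, hP₂⟩⟩ := hE
    obtain ⟨hq, hnq⟩ := restrictRels_union_of_subset q hE₁.1 hE₂.1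
    refine ⟨isRepair_of_restrictRels q ?_ (by rwa [hq]) (by rwa [hnq]), by rwa [hq],
      by rwa [hnq]⟩
    exact union_subset (hE₁.1.trans (restrictRels_subset _ D))
      (hE₂.1.trans (restrictRels_subset _ D))
  · intro E _
    exact restrictRels_union_restrictRels_not q E
  · rintro ⟨E₁, E₂⟩ hE
    simp only [mem_coe, mem_product, mem_filter, mem_rep_iff] at hE
    obtain ⟨hq, hnq⟩ := restrictRels_union_of_subset q hE.1.1.1 hE.2.1.1
    simp only [hq, hnq]

lemma card_rep_eq_mul (q : Rel → Prop) (S : Set (DBFD Rel Attr))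
    (D : Finset (DBFact Rel Attr Const)) :
    #(rep D S) = #(rep (restrictRels q D) S) * #(rep (restrictRels (fun r => ¬ q r) D) S) := by
  simpa only [and_self, filter_true] using
    card_filter_rep_eq_mul q S D (fun _ => True) (fun _ => True)

lemma entails_of_subset {E F : Finset (DBFact Rel Attr Const)}
    {Q : Finset (DBAtom Rel Attr Var Const)} (h : E ⊆ F) (hE : entails E Q) : entails F Q :=
  let ⟨hom, hQ⟩ := hE
  ⟨hom, fun α hα => h (hQ α hα)⟩

lemma entails_restrictRels_iff {q : Rel → Prop} {E : Finset (DBFact Rel Attr Const)}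
    {Q : Finset (DBAtom Rel Attr Var Const)} (hQ : ∀ α ∈ Q, q α.rel) :
    entails (restrictRels q E) Q ↔ entails E Q :=
  ⟨entails_of_subset (restrictRels_subset q E),
    fun ⟨hom, hE⟩ => ⟨hom, fun α hα => mem_filter.2 ⟨hE α hα, hQ α hα⟩⟩⟩

lemma applyHom_congr {h h' : Var → Const} {α : DBAtom Rel Attr Var Const}
    (hv : ∀ A v, α.val A = DBTerm.var v → h v = h' v) :
    applyHom h α = applyHom h' α := by
  unfold applyHom
  congr 1
  funext A
  cases hA : α.val A with
  | var v => exact hv A v hA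
  | const c => rfl

/-- Homomorphisms for two queries with disjoint variables glue to one for their union. -/
lemma entails_union_iff {E : Finset (DBFact Rel Attr Const)}
    {Q₁ Q₂ : Finset (DBAtom Rel Attr Var Const)} (hvars : Disjoint (qvars Q₁) (qvars Q₂)) :
    entails E (Q₁ ∪ Q₂) ↔ entails E Q₁ ∧ entails E Q₂ := by
  refine ⟨fun ⟨hom, hE⟩ => ⟨⟨hom, fun α hα => hE α (mem_union_left _ hα)⟩,
    ⟨hom, fun α hα => hE α (mem_union_right _ hα)⟩⟩, fun ⟨⟨hom₁, hE₁⟩, ⟨hom₂, hE₂⟩⟩ => ?_⟩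
  refine ⟨fun v => if v ∈ qvars Q₁ then hom₁ v else hom₂ v, fun α hα => ?_⟩
  rcases mem_union.1 hα with hα | hα
  · rw [applyHom_congr (h' := hom₁) fun A v hAv => if_pos ⟨α, hα, A, hAv⟩]
    exact hE₁ α hα
  · rw [applyHom_congr (h' := hom₂) fun A v hAv =>
      if_neg (Set.disjoint_right.1 hvars ⟨α, hα, A, hAv⟩)]
    exact hE₂ α hα

lemma card_repQ_eq_mul {q : Rel → Prop} (S : Set (DBFD Rel Attr))
    (D : Finset (DBFact Rel Attr Const)) {Q : Finset (DBAtom Rel Attr Var Const)}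
    (hQ : ∀ α ∈ Q, q α.rel) :
    #(repQ D S Q) =
      #(repQ (restrictRels q D) S Q) * #(rep (restrictRels (fun r => ¬ q r) D) S) := by
  have h := card_filter_rep_eq_mul q S D (entails · Q) (fun _ => True)
  simp only [and_true, filter_true, entails_restrictRels_iff hQ] at h
  exact h

lemma card_repQ_union_eq_mul {q : Rel → Prop} (S : Set (DBFD Rel Attr))
    (D : Finset (DBFact Rel Attr Const)) {Q₁ Q₂ : Finset (DBAtom Rel Attr Var Const)}
    (hQ₁ : ∀ α ∈ Q₁, q α.rel) (hQ₂ : ∀ α ∈ Q₂, ¬ q α.rel)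
    (hvars : Disjoint (qvars Q₁) (qvars Q₂)) :
    #(repQ D S (Q₁ ∪ Q₂)) =
      #(repQ (restrictRels q D) S Q₁) * #(repQ (restrictRels (fun r => ¬ q r) D) S Q₂) := by
  rw [repQ, repQ, repQ, ← card_filter_rep_eq_mul]
  congr 1
  exact filter_congr fun E _ => by
    rw [entails_union_iff hvars, entails_restrictRels_iff hQ₁,
      entails_restrictRels_iff (q := fun r => ¬ q r) hQ₂]

lemma rfreq_restrictRels {q : Rel → Prop} (S : Set (DBFD Rel Attr))
    (D : Finset (DBFact Rel Attr Const)) {Q : Finset (DBAtom Rel Attr Var Const)}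
    (hQ : ∀ α ∈ Q, q α.rel) :
    rfreq Q (restrictRels q D) S = rfreq Q D S := by
  have hpos := card_rep_pos S (restrictRels (fun r => ¬ q r) D)
  rw [rfreq, rfreq, card_repQ_eq_mul S D hQ, card_rep_eq_mul q S D]
  push_cast
  rw [mul_div_mul_right _ _ (by positivity)]

lemma rfreq_union_eq_mul {q : Rel → Prop} (S : Set (DBFD Rel Attr))
    (D : Finset (DBFact Rel Attr Const)) {Q₁ Q₂ : Finset (DBAtom Rel Attr Var Const)}
    (hQ₁ : ∀ α ∈ Q₁, q α.rel) (hQ₂ : ∀ α ∈ Q₂, ¬ q α.rel)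
    (hvars : Disjoint (qvars Q₁) (qvars Q₂)) :
    rfreq (Q₁ ∪ Q₂) D S =
      rfreq Q₁ (restrictRels q D) S * rfreq Q₂ (restrictRels (fun r => ¬ q r) D) S := by
  rw [rfreq, rfreq, rfreq, card_repQ_union_eq_mul S D hQ₁ hQ₂ hvars, card_rep_eq_mul q S D]
  push_cast
  exact mul_div_mul_comm _ _ _ _

lemma rel_ne_of_sjf_union {Q₁ Q₂ : Finset (DBAtom Rel Attr Var Const)}
    (hsjf : sjf (Q₁ ∪ Q₂)) (hatoms : Disjoint Q₁ Q₂) {α β : DBAtom Rel Attr Var Const}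
    (hα : α ∈ Q₁) (hβ : β ∈ Q₂) : α.rel ≠ β.rel := fun hrel =>
  disjoint_left.1 hatoms hα (hsjf α (mem_union_left _ hα) β (mem_union_right _ hβ) hrel ▸ hβ)

theorem stmt_9_general {Rel Attr Var Const : Type*} (S : Set (DBFD Rel Attr))
    (D : Finset (DBFact Rel Attr Const))
    (Q Q₁ Q₂ : Finset (DBAtom Rel Attr Var Const))
    (hQ : Q = Q₁ ∪ Q₂)
    (hatoms : Disjoint Q₁ Q₂) (hvars : Disjoint (qvars Q₁) (qvars Q₂))
    (hsjf : sjf Q) :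
    rfreq Q D S = rfreq Q₁ D S * rfreq Q₂ D S := by
  subst hQ
  let q : Rel → Prop := fun r => ∃ α ∈ Q₁, α.rel = r
  have hQ₁ : ∀ α ∈ Q₁, q α.rel := fun α hα => ⟨α, hα, rfl⟩
  have hQ₂ : ∀ β ∈ Q₂, ¬ q β.rel := fun β hβ ⟨α, hα, hrel⟩ =>
    rel_ne_of_sjf_union hsjf hatoms hα hβ hrel
  rw [rfreq_union_eq_mul S D hQ₁ hQ₂ hvars, rfreq_restrictRels S D hQ₁,
    rfreq_restrictRels S D hQ₂]

/-- If the SJFCQ `Q` is a disjoint union `Q₁ ⊎ Q₂` of nonempty CQs sharing no atoms and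
no variables, then `rfreq(Q,D,Σ) = rfreq(Q₁,D,Σ) × rfreq(Q₂,D,Σ)`. -/
theorem stmt_9 {Rel Attr Var Const : Type*} (S : Set (DBFD Rel Attr))
    (D : Finset (DBFact Rel Attr Const))
    (Q Q₁ Q₂ : Finset (DBAtom Rel Attr Var Const))
    (hQ : Q = Q₁ ∪ Q₂) (h1 : Q₁.Nonempty) (h2 : Q₂.Nonempty)
    (hatoms : Disjoint Q₁ Q₂) (hvars : Disjoint (qvars Q₁) (qvars Q₂))
    (hsjf : sjf Q) :
    rfreq Q D S = rfreq Q₁ D S * rfreq Q₂ D S :=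
  stmt_9_general S D Q Q₁ Q₂ hQ hatoms hvars hsjf
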